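/- Assume additionally that p j ≤ 1 for every job j. Let σ_0, σ_1, …, σ_T be any sequence of schedules in which each step is an improving k-swap. Then the number of steps that are of type-2 is at most (m · n) / (2 · δ_min). -/

import Mathlib

open Finset

/-- The load of machine `i` under schedule `σ` with processing times `p`. -/
noncomputable def load {n m : ℕ} (p : Fin n → ℝ) (σ : Fin n → Fin m) (i : Fin m) : ℝ :=
  ∑ j ∈ Finset.univ.filter (fun j => σ j = i), p j

/-- The makespan (maximum machine load) of schedule `σ`. -/
noncomputable def Lmax {n m : ℕ} (p : Fin n → ℝ) (σ : Fin n → Fin m) : ℝ :=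
  ⨆ i, load p σ i

/-- `δ_min`: the minimum of `|p(A) - p(B)|` over disjoint finsets of jobs `A`, `B`
with `1 ≤ |A| + |B| ≤ k`. -/
noncomputable def deltaMin (n k : ℕ) (p : Fin n → ℝ) : ℝ :=
  sInf { x | ∃ A B : Finset (Fin n), Disjoint A B ∧ 1 ≤ A.card + B.card ∧
    A.card + B.card ≤ k ∧ x = |∑ j ∈ A, p j - ∑ j ∈ B, p j| }

/-- An improving `k`-swap from `σ` to `σ'`, with critical machine `i`, machine `i' ≠ i`,
and disjoint job sets `A ⊆ σ⁻¹ {i}`, `B ⊆ σ⁻¹ {i'}` with `|A| ≥ 1`, `|A| + |B| ≤ k` and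
`0 < p(A) - p(B) < L_i(σ) - L_{i'}(σ)`; `σ'` sends `A` to `i'`, `B` to `i`, and agrees
with `σ` elsewhere. -/
def IsImprovingKSwap (k : ℕ) {n m : ℕ} (p : Fin n → ℝ) (σ σ' : Fin n → Fin m)
    (i i' : Fin m) (A B : Finset (Fin n)) : Prop :=
  load p σ i = Lmax p σ ∧
  i' ≠ i ∧
  Disjoint A B ∧
  (∀ j ∈ A, σ j = i) ∧ (∀ j ∈ B, σ j = i') ∧
  1 ≤ A.card ∧ A.card + B.card ≤ k ∧
  0 < (∑ j ∈ A, p j) - ∑ j ∈ B, p j ∧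
  (∑ j ∈ A, p j) - (∑ j ∈ B, p j) < load p σ i - load p σ i' ∧
  (∀ j ∈ A, σ' j = i') ∧ (∀ j ∈ B, σ' j = i) ∧
  ∀ j, j ∉ A → j ∉ B → σ' j = σ j

/-- The set `γ_s(σ)` of machines whose load is at most `L_max(σ) - δ_min`. -/
noncomputable def gammaS (k : ℕ) {n m : ℕ} (p : Fin n → ℝ) (σ : Fin n → Fin m) :
    Finset (Fin m) :=
  Finset.univ.filter (fun i => load p σ i ≤ Lmax p σ - deltaMin n k p)

/-- The potential `Φ(σ) = ∑_{(i,i')} |L_i(σ) - L_{i'}(σ)|` over ordered pairs of machines. -/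
noncomputable def potential {n m : ℕ} (p : Fin n → ℝ) (σ : Fin n → Fin m) : ℝ :=
  ∑ i : Fin m, ∑ i' : Fin m, |load p σ i - load p σ i'|

/-!
An improving swap moves the loads of `i` and `i'` towards each other and keeps their sum, so no
distance from them to a third machine grows and the potential `Φ` does not increase. In a type-2
step the gap between `i` and `i'` shrinks by at least `2 δ_min`: the loads move by
`Δ = p(A) - p(B) ≥ δ_min` each, and they cannot cross by more than the slack left, since the new
load of `i'` stays `δ_min` below the makespan, which has not grown. This gap counts twice in `Φ`. As loads are nonnegative and sum to at most `n`, `0 ≤ Φ ≤ 2 m n`.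
-/

lemma abs_add_sub_add_abs_sub_sub_le {a b d : ℝ} (x : ℝ) (hd : 0 ≤ d) (hdb : d ≤ b - a) :
    |a + d - x| + |b - d - x| ≤ |a - x| + |b - x| := by
  rcases abs_cases (a + d - x) with ⟨e1, s1⟩ | ⟨e1, s1⟩ <;>
  rcases abs_cases (b - d - x) with ⟨e2, s2⟩ | ⟨e2, s2⟩ <;>
  rcases abs_cases (a - x) with ⟨e3, s3⟩ | ⟨e3, s3⟩ <;>
  rcases abs_cases (b - x) with ⟨e4, s4⟩ | ⟨e4, s4⟩ <;>
  linarith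

section PairSums

variable {ι : Type*} [Fintype ι] [DecidableEq ι]

lemma Finset.sum_eq_add_add_sum_compl_pair {M : Type*} [AddCommMonoid M] (f : ι → M)
    {i i' : ι} (hne : i ≠ i') :
    ∑ a, f a = f i + f i' + ∑ a ∈ {i, i'}ᶜ, f a := by
  rw [← sum_add_sum_compl {i, i'}, sum_pair hne]

lemma two_mul_le_sum_sum_of_supported_on_pair {h : ι → ι → ℝ} {i i' : ι} (hne : i ≠ i')
    (hsymm : ∀ a b, h a b = h b a) (hi : h i i = 0) (hi' : h i' i' = 0)
    (hout : ∀ a ∉ ({i, i'} : Finset ι), ∀ b ∉ ({i, i'} : Finset ι), h a b = 0)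
    (hmix : ∀ b ∉ ({i, i'} : Finset ι), 0 ≤ h i b + h i' b) :
    2 * h i i' ≤ ∑ a, ∑ b, h a b := by
  have hrow : ∀ a ∈ ({i, i'} : Finset ι)ᶜ, ∑ b, h a b = h i a + h i' a := by
    intro a ha
    rw [sum_eq_add_add_sum_compl_pair _ hne,
      sum_eq_zero fun b hb => hout a (mem_compl.1 ha) b (mem_compl.1 hb), hsymm a i, hsymm a i',
      add_zero]
  have hmix_sum : 0 ≤ ∑ b ∈ ({i, i'} : Finset ι)ᶜ, (h i b + h i' b) :=
    sum_nonneg fun b hb => hmix b (mem_compl.1 hb)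
  rw [sum_add_distrib] at hmix_sum
  rw [sum_eq_add_add_sum_compl_pair _ hne, sum_eq_add_add_sum_compl_pair (h i) hne,
    sum_eq_add_add_sum_compl_pair (h i') hne, sum_congr rfl hrow, sum_add_distrib]
  linarith [hsymm i' i]

lemma sum_sum_abs_sub_add_le {f g : ι → ℝ} {i i' : ι} {d : ℝ} (hne : i ≠ i')
    (hgi : g i = f i - d) (hgi' : g i' = f i' + d) (hg : ∀ a ∉ ({i, i'} : Finset ι), g a = f a)
    (hd : 0 ≤ d) (hdf : d ≤ f i - f i') :
    ∑ a, ∑ b, |g a - g b| + 2 * (|f i - f i'| - |g i - g i'|) ≤ ∑ a, ∑ b, |f a - f b| := by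
  have key := two_mul_le_sum_sum_of_supported_on_pair
    (h := fun a b => |f a - f b| - |g a - g b|) hne
    (fun a b => by rw [abs_sub_comm (f a), abs_sub_comm (g a)]) (by simp) (by simp)
    (fun a ha b hb => by simp only [hg a ha, hg b hb, sub_self])
    (fun b hb => by
      have := abs_add_sub_add_abs_sub_sub_le (f b) hd hdf
      simp only [hgi, hgi', hg b hb]
      linarith)
  simp only [sum_sub_distrib] at key
  linarith

end PairSums

section Loads

variable {n m k : ℕ} {p : Fin n → ℝ}

lemma load_le_Lmax (p : Fin n → ℝ) (σ : Fin n → Fin m) (a : Fin m) : load p σ a ≤ Lmax p σ :=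
  le_ciSup (Set.finite_range _).bddAbove a

lemma load_nonneg (hp : ∀ j, 0 ≤ p j) (σ : Fin n → Fin m) (a : Fin m) : 0 ≤ load p σ a :=
  sum_nonneg fun j _ => hp j

lemma sum_load (p : Fin n → ℝ) (σ : Fin n → Fin m) : ∑ a, load p σ a = ∑ j, p j :=
  sum_fiberwise_of_maps_to (fun j _ => mem_univ (σ j)) p

lemma load_sub_load_eq_sum_of_eqOn_compl {σ σ' : Fin n → Fin m} {S : Finset (Fin n)}
    (hS : ∀ j ∉ S, σ' j = σ j) (a : Fin m) :
    load p σ' a - load p σ a =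
      ∑ j ∈ S, ((if σ' j = a then p j else 0) - if σ j = a then p j else 0) := by
  simp only [load, sum_filter, ← sum_sub_distrib]
  refine (sum_subset (subset_univ S) fun j _ hj => ?_).symm
  rw [hS j hj, sub_self]

lemma deltaMin_le_abs {A B : Finset (Fin n)} (hAB : Disjoint A B) (hpos : 1 ≤ A.card + B.card)
    (hk : A.card + B.card ≤ k) : deltaMin n k p ≤ |∑ j ∈ A, p j - ∑ j ∈ B, p j| :=
  csInf_le ⟨0, by rintro _ ⟨_, _, _, _, _, rfl⟩; exact abs_nonneg _⟩ ⟨A, B, hAB, hpos, hk, rfl⟩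

lemma potential_nonneg (p : Fin n → ℝ) (σ : Fin n → Fin m) : 0 ≤ potential p σ :=
  sum_nonneg fun _ _ => sum_nonneg fun _ _ => abs_nonneg _

lemma potential_le (hp : ∀ j, 0 ≤ p j) (σ : Fin n → Fin m) :
    potential p σ ≤ 2 * m * ∑ j, p j := calc
  potential p σ ≤ ∑ a : Fin m, ∑ b : Fin m, (load p σ a + load p σ b) :=
    sum_le_sum fun a _ => sum_le_sum fun b _ =>
      (abs_sub _ _).trans_eq <| by
        rw [abs_of_nonneg (load_nonneg hp σ a), abs_of_nonneg (load_nonneg hp σ b)]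
  _ = 2 * m * ∑ j, p j := by
    simp only [sum_add_distrib, sum_const, card_univ, Fintype.card_fin, nsmul_eq_mul,
      ← mul_sum, sum_load]
    ring

end Loads

namespace IsImprovingKSwap

variable {n m k : ℕ} {p : Fin n → ℝ} {σ σ' : Fin n → Fin m} {i i' : Fin m}
  {A B : Finset (Fin n)}

lemma load_sub_load (h : IsImprovingKSwap k p σ σ' i i' A B) (a : Fin m) :
    load p σ' a - load p σ a =
      ((if i' = a then 1 else 0) - if i = a then 1 else 0) *
        (∑ j ∈ A, p j - ∑ j ∈ B, p j) := by
  obtain ⟨-, -, hAB, hA, hB, -, -, -, -, hA', hB', hrest⟩ := h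
  have hS : ∀ j ∉ A ∪ B, σ' j = σ j := fun j hj =>
    hrest j (fun h => hj (mem_union_left _ h)) (fun h => hj (mem_union_right _ h))
  have hsumA : ∑ j ∈ A, ((if σ' j = a then p j else 0) - if σ j = a then p j else 0) =
      ∑ j ∈ A, ((if i' = a then p j else 0) - if i = a then p j else 0) :=
    sum_congr rfl fun j hj => by rw [hA' j hj, hA j hj]
  have hsumB : ∑ j ∈ B, ((if σ' j = a then p j else 0) - if σ j = a then p j else 0) =
      ∑ j ∈ B, ((if i = a then p j else 0) - if i' = a then p j else 0) :=
    sum_congr rfl fun j hj => by rw [hB' j hj, hB j hj]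
  rw [load_sub_load_eq_sum_of_eqOn_compl hS, sum_union hAB, hsumA, hsumB]
  split_ifs <;> simp only [sum_sub_distrib, sum_const_zero] <;> ring

lemma load_source (h : IsImprovingKSwap k p σ σ' i i' A B) :
    load p σ' i = load p σ i - (∑ j ∈ A, p j - ∑ j ∈ B, p j) := by
  have := h.load_sub_load i
  simp only [h.2.1, if_false, if_true] at this
  linarith

lemma load_target (h : IsImprovingKSwap k p σ σ' i i' A B) :
    load p σ' i' = load p σ i' + (∑ j ∈ A, p j - ∑ j ∈ B, p j) := by
  have := h.load_sub_load i'
  simp only [h.2.1.symm, if_false, if_true] at this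
  linarith

lemma load_of_ne (h : IsImprovingKSwap k p σ σ' i i' A B) {a : Fin m} (hai : a ≠ i)
    (hai' : a ≠ i') : load p σ' a = load p σ a := by
  have := h.load_sub_load a
  simp only [hai.symm, hai'.symm, if_false, sub_zero, zero_mul] at this
  linarith

lemma deltaMin_le (h : IsImprovingKSwap k p σ σ' i i' A B) :
    deltaMin n k p ≤ ∑ j ∈ A, p j - ∑ j ∈ B, p j := by
  obtain ⟨-, -, hAB, -, -, hA, hk, hpos, -⟩ := h
  simpa only [abs_of_pos hpos] using deltaMin_le_abs (p := p) hAB (by omega) hk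

lemma Lmax_le (h : IsImprovingKSwap k p σ σ' i i' A B) : Lmax p σ' ≤ Lmax p σ := by
  have : Nonempty (Fin m) := ⟨i⟩
  have hsource := h.load_source
  have htarget := h.load_target
  have hother := @h.load_of_ne
  obtain ⟨hcrit, -, -, -, -, -, -, hpos, hlt, -⟩ := h
  refine ciSup_le fun a => ?_
  by_cases hai : a = i
  · subst hai; linarith
  by_cases hai' : a = i'
  · subst hai'; linarith
  · rw [hother hai hai']; exact load_le_Lmax p σ a

lemma potential_add_le (h : IsImprovingKSwap k p σ σ' i i' A B) :
    potential p σ' + (if i' ∈ gammaS k p σ' then 4 * deltaMin n k p else 0) ≤ potential p σ := by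
  have hsource := h.load_source
  have htarget := h.load_target
  have hother := @h.load_of_ne
  have hδ := h.deltaMin_le
  have hLmax := h.Lmax_le
  obtain ⟨hcrit, hne, -, -, -, -, -, hpos, hlt, -⟩ := h
  set Δ := ∑ j ∈ A, p j - ∑ j ∈ B, p j
  have hpair := sum_sum_abs_sub_add_le hne.symm hsource htarget
    (fun a ha => hother (by simp_all) (by simp_all)) hpos.le hlt.le
  rw [hsource, htarget, abs_of_pos (by linarith : 0 < load p σ i - load p σ i')] at hpair
  unfold potential
  split_ifs with htype
  · have hgap := (mem_filter.1 htype).2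
    have : |load p σ i - Δ - (load p σ i' + Δ)| ≤ load p σ i - load p σ i' - 2 * deltaMin n k p :=
      abs_le.2 ⟨by linarith, by linarith⟩
    linarith
  · have : |load p σ i - Δ - (load p σ i' + Δ)| ≤ load p σ i - load p σ i' :=
      abs_le.2 ⟨by linarith, by linarith⟩
    linarith

end IsImprovingKSwap

theorem type2_steps_le_general {n m k : ℕ}
    (p : Fin n → ℝ) (hp : ∀ j, 0 < p j) (hp1 : ∀ j, p j ≤ 1)
    (hδ : 0 < deltaMin n k p)
    (T : ℕ) (σ : ℕ → Fin n → Fin m) (i i' : ℕ → Fin m)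
    (A B : ℕ → Finset (Fin n))
    (hsteps : ∀ t < T, IsImprovingKSwap k p (σ t) (σ (t + 1)) (i t) (i' t) (A t) (B t)) :
    (((Finset.range T).filter (fun t => i' t ∈ gammaS k p (σ (t + 1)))).card : ℝ) ≤
      (m : ℝ) * (n : ℝ) / (2 * deltaMin n k p) := by
  have hΦ0 : potential p (σ 0) ≤ 2 * m * n := calc
    potential p (σ 0) ≤ 2 * m * ∑ j, p j := potential_le (fun j => (hp j).le) (σ 0)
    _ ≤ 2 * m * n := by
      gcongr
      simpa using sum_le_sum fun j (_ : j ∈ univ) => hp1 j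
  have hdescent : (((range T).filter fun t => i' t ∈ gammaS k p (σ (t + 1))).card : ℝ) *
      (4 * deltaMin n k p) ≤ potential p (σ 0) - potential p (σ T) := calc
    _ = ∑ t ∈ range T, if i' t ∈ gammaS k p (σ (t + 1)) then 4 * deltaMin n k p else 0 := by
      rw [sum_ite, sum_const, sum_const_zero, nsmul_eq_mul, add_zero]
    _ ≤ ∑ t ∈ range T, (potential p (σ t) - potential p (σ (t + 1))) :=
      sum_le_sum fun t ht => le_sub_iff_add_le'.2 (hsteps t (mem_range.1 ht)).potential_add_le
    _ = potential p (σ 0) - potential p (σ T) := sum_range_sub' _ _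
  rw [le_div_iff₀ (by positivity)]
  linarith [potential_nonneg p (σ T)]

/-- If additionally all processing times are at most `1`, then in any sequence of
improving `k`-swaps the number of steps of type-2 (i.e. steps whose machine `i'` lands in
`γ_s` after the swap) is at most `m · n / (2 · δ_min)`. -/
theorem type2_steps_le {n m k : ℕ} (hm : 2 ≤ m) (hk : 1 ≤ k)
    (p : Fin n → ℝ) (hp : ∀ j, 0 < p j) (hp1 : ∀ j, p j ≤ 1)
    (hδ : 0 < deltaMin n k p)
    (T : ℕ) (σ : ℕ → Fin n → Fin m) (i i' : ℕ → Fin m)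
    (A B : ℕ → Finset (Fin n))
    (hsteps : ∀ t < T, IsImprovingKSwap k p (σ t) (σ (t + 1)) (i t) (i' t) (A t) (B t)) :
    (((Finset.range T).filter (fun t => i' t ∈ gammaS k p (σ (t + 1)))).card : ℝ) ≤
      (m : ℝ) * (n : ℝ) / (2 * deltaMin n k p) :=
  type2_steps_le_general p hp hp1 hδ T σ i i' A B hsteps
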